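/- For each subset A of the free monoid M_2 on {a,b}, let T_A be the tree on {0,1,2} consisting of all sequences in 2^{<ℕ} together with all sequences ŵ⌢2 for w ∈ A (where ŵ is the binary sequence corresponding to w). Then for A, B ⊆ M_2: there exists m ∈ M_2 with mA = B ∩ mM_2 if and only if there exists a finite sequence u with T_A = (T_B)_u, where (T_B)_u = {v : u⌢v ∈ T_B}. -/

import Mathlib

/-! Because `hatSeq` is an injective monoid homomorphism onto the binary sequences, the condition
`mA = B ∩ mM₂` says exactly that `A = m⁻¹B := {w | mw ∈ B}`, and for a binary `u = m̂` the subtree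
`(T_B)_u` is `T_{m⁻¹B}`. Conversely, `⟨0⟩ ∈ T_A` forces any `u` with `T_A = (T_B)_u` to be binary,
and `A` is recovered from `T_A` as the set of `w` with `ŵ⌢2 ∈ T_A`. -/

/-- The binary sequence `ŵ ∈ 2^{<ℕ}` corresponding to a word `w ∈ M₂ = ⟨a,b⟩`
(`a ↦ 0`, `b ↦ 1`), viewed inside `3^{<ℕ}`. -/
def hatSeq (w : FreeMonoid Bool) : List (Fin 3) :=
  w.toList.map (fun b => if b then 1 else 0)

/-- The tree `T_A` on `{0,1,2}` associated to `A ⊆ M₂`: all of `2^{<ℕ}` together with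
the sequences `ŵ⌢2` for `w ∈ A`. -/
def treeOfSet (A : Set (FreeMonoid Bool)) : Set (List (Fin 3)) :=
  {s | ∀ x ∈ s, x ≠ 2} ∪ {s | ∃ w ∈ A, s = hatSeq w ++ [2]}

theorem Set.image_mul_left_eq_inter_iff {M : Type*} [Mul M] [IsLeftCancelMul M]
    (m : M) (A B : Set M) :
    (fun a => m * a) '' A = B ∩ {w | ∃ u, w = m * u} ↔ A = (fun a => m * a) ⁻¹' B := by
  have hrange : {w | ∃ u, w = m * u} = Set.range (fun a => m * a) := by
    ext w; simp only [Set.mem_ofPred_eq, Set.mem_range, eq_comm]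
  rw [hrange]
  constructor
  · intro h
    rw [← Set.preimage_image_eq A (mul_right_injective m), h, Set.preimage_inter_range]
  · rintro rfl
    exact Set.image_preimage_eq_inter_range

theorem List.append_eq_append_singleton_iff_of_notMem {α : Type*} {l₁ l₂ v : List α} {a : α}
    (ha : a ∉ l₁) : l₁ ++ v = l₂ ++ [a] ↔ ∃ s, l₂ = l₁ ++ s ∧ v = s ++ [a] := by
  refine ⟨fun h => ?_, fun ⟨s, hl₂, hv⟩ => by rw [hl₂, hv, List.append_assoc]⟩
  rcases List.append_eq_append_iff.mp h with h | ⟨_ | ⟨b, t⟩, hl₁, hv⟩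
  · exact h
  · exact ⟨[], by simpa using hl₁.symm, by simpa using hv.symm⟩
  · obtain ⟨rfl, -, -⟩ : a = b ∧ t = [] ∧ v = [] := by simpa using hv
    exact absurd (hl₁ ▸ List.mem_append_right l₂ List.mem_cons_self) ha

lemma hatSeq_mul (m w : FreeMonoid Bool) : hatSeq (m * w) = hatSeq m ++ hatSeq w := by
  simp [hatSeq, FreeMonoid.toList_mul]

lemma hatSeq_injective : Function.Injective hatSeq :=
  (List.map_injective_iff.mpr (by decide)).comp FreeMonoid.toList.injective

lemma range_hatSeq : Set.range hatSeq = {u | ∀ x ∈ u, x ≠ 2} := by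
  have hbit : Set.range (fun b : Bool => if b then (1 : Fin 3) else 0) = {x | x ≠ 2} := by
    ext x; fin_cases x <;> simp
  rw [show hatSeq = List.map _ ∘ FreeMonoid.toList from rfl, Set.range_comp,
    FreeMonoid.toList.surjective.range_eq, Set.image_univ, Set.range_list_map, hbit]
  rfl

lemma ne_two_of_mem_hatSeq {w : FreeMonoid Bool} {x : Fin 3} (hx : x ∈ hatSeq w) : x ≠ 2 :=
  (range_hatSeq.subset ⟨w, rfl⟩ : ∀ x ∈ hatSeq w, x ≠ 2) x hx

lemma hatSeq_eq_hatSeq_append_iff {m w : FreeMonoid Bool} {s : List (Fin 3)} :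
    hatSeq w = hatSeq m ++ s ↔ ∃ c, w = m * c ∧ s = hatSeq c := by
  refine ⟨fun h => ?_, fun ⟨c, hw, hs⟩ => by rw [hw, hs, hatSeq_mul]⟩
  have hs : s ∈ Set.range hatSeq := by
    rw [range_hatSeq]
    intro x hx
    exact ne_two_of_mem_hatSeq (h ▸ List.mem_append_right _ hx)
  obtain ⟨c, rfl⟩ := hs
  exact ⟨c, hatSeq_injective (by rw [h, hatSeq_mul]), rfl⟩

lemma hatSeq_append_two_mem_treeOfSet {A : Set (FreeMonoid Bool)} {w : FreeMonoid Bool} :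
    hatSeq w ++ [2] ∈ treeOfSet A ↔ w ∈ A := by
  simp [treeOfSet, hatSeq_injective.eq_iff]

lemma treeOfSet_injective : Function.Injective treeOfSet := fun A A' h => by
  ext w; rw [← hatSeq_append_two_mem_treeOfSet, h, hatSeq_append_two_mem_treeOfSet]

lemma treeOfSet_preimage_mul_left (m : FreeMonoid Bool) (B : Set (FreeMonoid Bool)) :
    treeOfSet ((fun a => m * a) ⁻¹' B) = {v | hatSeq m ++ v ∈ treeOfSet B} := by
  have hm : ∀ x ∈ hatSeq m, x ≠ 2 := fun _ => ne_two_of_mem_hatSeq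
  ext v
  simp only [treeOfSet, Set.mem_union, Set.mem_ofPred_eq, Set.mem_preimage, List.forall_mem_append,
    List.append_eq_append_singleton_iff_of_notMem (fun h => ne_two_of_mem_hatSeq h rfl),
    hatSeq_eq_hatSeq_append_iff]
  rw [and_iff_right hm]
  simp

lemma forall_ne_two_of_append_zero_mem_treeOfSet {u : List (Fin 3)} {B : Set (FreeMonoid Bool)}
    (h : u ++ [0] ∈ treeOfSet B) : ∀ x ∈ u, x ≠ 2 := by
  rcases h with h | ⟨w, -, hw⟩
  · exact fun x hx => h x (List.mem_append_left _ hx)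
  · exact absurd (List.append_inj' hw rfl).2 (by decide)

theorem prefixQO_iff_subtree (A B : Set (FreeMonoid Bool)) :
    (∃ m : FreeMonoid Bool, (fun a => m * a) '' A = B ∩ {w | ∃ u, w = m * u}) ↔
    (∃ u : List (Fin 3), treeOfSet A = {v | u ++ v ∈ treeOfSet B}) := by
  simp only [Set.image_mul_left_eq_inter_iff]
  constructor
  · rintro ⟨m, rfl⟩
    exact ⟨hatSeq m, treeOfSet_preimage_mul_left m B⟩
  · rintro ⟨u, hu⟩
    have hu_binary : u ∈ Set.range hatSeq := by
      rw [range_hatSeq]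
      exact forall_ne_two_of_append_zero_mem_treeOfSet (hu.subset (Or.inl (by decide)))
    obtain ⟨m, rfl⟩ := hu_binary
    exact ⟨m, treeOfSet_injective (hu.trans (treeOfSet_preimage_mul_left m B).symm)⟩
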